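/- arXiv:2307.01179 — 6 statements merged into one kernel-verified Lean document; each statement's English description precedes it below -/
import Mathlib

section
/- Fix v > 0 and define U_v(x) := v·x − Φ₊(x) for x ∈ [2, ∞). Then U_v attains its maximum on [2, ∞) at the unique point x_v* = 2·cosh(v/2), and the maximum value is U_v(x_v*) = 4·sinh(v/2). -/
/-!
Substituting `x = 2 cosh t` with `t ≥ 0` turns `Φ₊(x)` into `4 (t cosh t - sinh t)`, so
`U_v(2 cosh t) = 4 ((v/2 - t) cosh t + sinh t)`. The derivative of this in `t` is
`4 (v/2 - t) sinh t`, which is positive on `(0, v/2)` and negative on `(v/2, ∞)`, so the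
maximum is attained exactly at `t = v/2`, with value `4 sinh (v/2)`.
-/

/-- Inverse hyperbolic cosine, `arcosh x = log (x + √(x² − 1))`. -/
noncomputable def arcosh (x : ℝ) : ℝ := Real.log (x + Real.sqrt (x ^ 2 - 1))

/-- The upper-tail rate function `Φ₊(μ) = 2μ·arcosh(μ/2) − 2√(μ² − 4)`. -/
noncomputable def PhiPlus (μ : ℝ) : ℝ :=
  2 * μ * arcosh (μ / 2) - 2 * Real.sqrt (μ ^ 2 - 4)

open Real hiding arcosh

lemma arcosh_eq_real_arcosh : arcosh = Real.arcosh := rfl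

lemma exists_eq_two_mul_cosh {x : ℝ} (hx : 2 ≤ x) : ∃ t, 0 ≤ t ∧ x = 2 * cosh t :=
  ⟨Real.arcosh (x / 2), arcosh_nonneg (by linarith), by rw [cosh_arcosh (by linarith)]; ring⟩

lemma PhiPlus_two_mul_cosh {t : ℝ} (ht : 0 ≤ t) :
    PhiPlus (2 * cosh t) = 4 * (t * cosh t - sinh t) := by
  have hsqrt : sqrt ((2 * cosh t) ^ 2 - 4) = 2 * sinh t := by
    rw [show (2 * cosh t) ^ 2 - 4 = (2 * sinh t) ^ 2 by nlinarith [cosh_sq_sub_sinh_sq t]]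
    exact sqrt_sq (by linarith [sinh_nonneg_iff.mpr ht])
  rw [PhiPlus, hsqrt, mul_div_cancel_left₀ _ two_ne_zero, arcosh_eq_real_arcosh, arcosh_cosh ht]
  ring

lemma mul_two_mul_cosh_sub_PhiPlus (v : ℝ) {t : ℝ} (ht : 0 ≤ t) :
    v * (2 * cosh t) - PhiPlus (2 * cosh t) = 4 * ((v / 2 - t) * cosh t + sinh t) := by
  rw [PhiPlus_two_mul_cosh ht]
  ring

lemma sub_mul_cosh_add_sinh_lt_sinh {s t : ℝ} (hs : 0 ≤ s) (ht : 0 ≤ t) (hts : t ≠ s) :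
    (s - t) * cosh t + sinh t < sinh s := by
  set g : ℝ → ℝ := fun u => (s - u) * cosh u + sinh u
  have hg : ∀ u, HasDerivAt g ((s - u) * sinh u) u := fun u => by
    have := (((hasDerivAt_id u).const_sub s).mul (hasDerivAt_cosh u)).add (hasDerivAt_sinh u)
    exact this.congr_deriv (by simp only [id]; ring)
  have hcont : Continuous g := by fun_prop
  suffices g t < g s by simpa [g] using this
  rcases hts.lt_or_gt with hlt | hgt
  · refine strictMonoOn_of_deriv_pos (convex_Icc 0 s) hcont.continuousOn (fun u hu => ?_)
      ⟨ht, hlt.le⟩ ⟨hs, le_rfl⟩ hlt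
    rw [interior_Icc] at hu
    rw [(hg u).deriv]
    exact mul_pos (sub_pos.mpr hu.2) (sinh_pos_iff.mpr hu.1)
  · refine strictAntiOn_of_deriv_neg (convex_Ici s) hcont.continuousOn (fun u hu => ?_)
      Set.self_mem_Ici hgt.le hgt
    rw [interior_Ici] at hu
    rw [(hg u).deriv]
    exact mul_neg_of_neg_of_pos (sub_neg.mpr hu) (sinh_pos_iff.mpr (hs.trans_lt hu))

lemma sub_mul_cosh_add_sinh_le_sinh {s t : ℝ} (hs : 0 ≤ s) (ht : 0 ≤ t) :
    (s - t) * cosh t + sinh t ≤ sinh s := by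
  rcases eq_or_ne t s with rfl | hts
  · simp
  · exact (sub_mul_cosh_add_sinh_lt_sinh hs ht hts).le

/-- For `v > 0`, the function `U_v(x) = v·x − Φ₊(x)` attains its maximum on `[2, ∞)`
at the unique point `x_v* = 2·cosh(v/2)`, with maximum value `4·sinh(v/2)`. -/
theorem Uv_max (v : ℝ) (hv : 0 < v) :
    2 * Real.cosh (v / 2) ∈ Set.Ici (2 : ℝ) ∧
    (∀ x ∈ Set.Ici (2 : ℝ),
      v * x - PhiPlus x ≤ v * (2 * Real.cosh (v / 2)) - PhiPlus (2 * Real.cosh (v / 2))) ∧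
    v * (2 * Real.cosh (v / 2)) - PhiPlus (2 * Real.cosh (v / 2)) = 4 * Real.sinh (v / 2) ∧
    (∀ x ∈ Set.Ici (2 : ℝ),
      v * x - PhiPlus x = 4 * Real.sinh (v / 2) → x = 2 * Real.cosh (v / 2)) := by
  have hs : 0 ≤ v / 2 := by positivity
  have hval : v * (2 * cosh (v / 2)) - PhiPlus (2 * cosh (v / 2)) = 4 * sinh (v / 2) := by
    rw [mul_two_mul_cosh_sub_PhiPlus v hs]
    ring
  refine ⟨by simp [one_le_cosh], fun x hx => ?_, hval, fun x hx hx_max => ?_⟩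
  · obtain ⟨t, ht, rfl⟩ := exists_eq_two_mul_cosh hx
    rw [mul_two_mul_cosh_sub_PhiPlus v ht, hval]
    linarith [sub_mul_cosh_add_sinh_le_sinh hs ht]
  · obtain ⟨t, ht, rfl⟩ := exists_eq_two_mul_cosh hx
    by_contra hne
    have hts : t ≠ v / 2 := by rintro rfl; exact hne rfl
    rw [mul_two_mul_cosh_sub_PhiPlus v ht] at hx_max
    linarith [sub_mul_cosh_add_sinh_lt_sinh hs ht hts]
end

section
/- Fix D ∈ ℝ, v > 0 and t > 0. Then the sum over i ∈ ℕ (i ≥ 0) and j ∈ ℤ subject to the constraint i + j + 1 ≤ D of the terms J_{i+j+1}(2t)²·e^{v(j + 1/2)} is at most e^{Dv + 2v}/(e^v − 1)². (This is the bound ∑_{a∈ℕ'} ∑_{ℓ∈ℤ' : a+ℓ ≤ D} J_{a+ℓ}(2t)²·e^{vℓ} ≤ e^{Dv+2v}/(e^v−1)², where ℕ' = {1/2, 3/2, …}, ℤ' = ℤ + 1/2, a = i + 1/2 and ℓ = j + 1/2.) -/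
/-! Since `|J_m| ≤ 1` and `e^{v(j+1/2)} ≤ e^{v(j+1)} = e^{-vi} e^{v(i+j+1)}`, the summand is
dominated by `e^{-vi} e^{vk}` with `k = i + j + 1 ≤ ⌊D⌋`. The shear `(i, j) ↦ (i, i + j + 1)` of
`ℕ × ℤ` turns the dominating sum into the product of `∑ᵢ e^{-vi} = e^v/(e^v-1)` and
`∑_{k ≤ ⌊D⌋} e^{vk} = e^{v(⌊D⌋+1)}/(e^v-1)`, which is at most `e^{Dv+2v}/(e^v-1)²`. -/

/-- The Bessel function of the first kind of integer order:
`J_m(x) = (1/π) ∫₀^π cos(mθ − x·sin θ) dθ`. -/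
noncomputable def besselJ (m : ℤ) (x : ℝ) : ℝ :=
  (1 / Real.pi) * ∫ θ in (0 : ℝ)..Real.pi, Real.cos (m * θ - x * Real.sin θ)

lemma abs_besselJ_le_one (m : ℤ) (x : ℝ) : |besselJ m x| ≤ 1 := by
  have hI : ‖∫ θ in (0 : ℝ)..Real.pi, Real.cos (m * θ - x * Real.sin θ)‖ ≤ 1 * |Real.pi - 0| :=
    intervalIntegral.norm_integral_le_of_norm_le_const fun θ _ => by
      simpa using Real.abs_cos_le_one _
  rw [Real.norm_eq_abs, sub_zero, abs_of_pos Real.pi_pos, one_mul] at hI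
  rw [besselJ, abs_mul, abs_of_pos (by positivity : 0 < 1 / Real.pi), one_div,
    inv_mul_le_iff₀ Real.pi_pos, mul_one]
  exact hI

lemma besselJ_sq_le_one (m : ℤ) (x : ℝ) : besselJ m x ^ 2 ≤ 1 :=
  (sq_le_one_iff_abs_le_one _).2 (abs_besselJ_le_one m x)

lemma Real.exp_int_mul (x : ℝ) (n : ℤ) : Real.exp (n * x) = Real.exp x ^ n := by
  rw [mul_comm, Real.exp_mul, Real.rpow_intCast]

lemma besselJ_sq_mul_exp_le (m : ℤ) (x : ℝ) {v : ℝ} (hv : 0 ≤ v) (j : ℤ) :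
    besselJ m x ^ 2 * Real.exp (v * (j + 1 / 2)) ≤ Real.exp v ^ (j + 1) := by
  rw [← Real.exp_int_mul]
  exact (mul_le_of_le_one_left (Real.exp_pos _).le (besselJ_sq_le_one m x)).trans
    (Real.exp_le_exp.2 (by push_cast; nlinarith))

lemma hasSum_indicator_Iic_zpow {r : ℝ} (hr : 1 < r) (N : ℤ) :
    HasSum ((Set.Iic N).indicator (r ^ ·)) (r ^ (N + 1) / (r - 1)) := by
  have hr0 : 0 < r := one_pos.trans hr
  have hinj : Function.Injective (fun n : ℕ => N - n) := fun a b h => by simpa using h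
  have hvanish : ∀ k ∉ Set.range (fun n : ℕ => N - n), (Set.Iic N).indicator (r ^ ·) k = 0 :=
    fun k hk => Set.indicator_of_notMem (fun hkN => hk ⟨(N - k).toNat, by
      simp only [Set.mem_Iic] at hkN ⊢; omega⟩) _
  have hterm : (Set.Iic N).indicator (r ^ ·) ∘ (fun n : ℕ => N - n) = fun n => r ^ N * r⁻¹ ^ n := by
    ext n
    rw [Function.comp_apply, Set.indicator_of_mem (by simp), zpow_sub₀ hr0.ne', zpow_natCast,
      inv_pow, div_eq_mul_inv]
  have hsum : r ^ N * (1 - r⁻¹)⁻¹ = r ^ (N + 1) / (r - 1) := by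
    rw [zpow_add_one₀ hr0.ne']
    field_simp
  rw [← hinj.hasSum_iff hvanish, hterm, ← hsum]
  exact (hasSum_geometric_of_lt_one (inv_nonneg.2 hr0.le) (inv_lt_one_of_one_lt₀ hr)).mul_left _

lemma HasSum.mul_shear_of_nonneg {f : ℕ → ℝ} {F : ℤ → ℝ} {a b : ℝ} (hf : HasSum f a)
    (hF : HasSum F b) (hf0 : 0 ≤ f) (hF0 : 0 ≤ F) (c : ℤ) :
    HasSum (fun p : ℕ × ℤ => f p.1 * F (p.1 + p.2 + c)) (a * b) := by
  let e : ℕ × ℤ ≃ ℕ × ℤ := Equiv.prodShear (Equiv.refl ℕ) fun i => Equiv.addLeft ((i : ℤ) + c)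
  have hshear : (fun p : ℕ × ℤ => f p.1 * F (p.1 + p.2 + c)) = (fun q => f q.1 * F q.2) ∘ e := by
    ext ⟨i, j⟩
    simp only [Function.comp_apply, e, Equiv.prodShear_apply, Equiv.coe_refl, id_eq,
      Equiv.coe_addLeft]
    ring_nf
  rw [hshear, e.hasSum_iff]
  exact hf.mul hF (hf.summable.mul_of_nonneg hF.summable hf0 hF0)

lemma hasSum_inv_pow_mul_indicator_Iic_zpow {r : ℝ} (hr : 1 < r) (N : ℤ) :
    HasSum (fun p : ℕ × ℤ => r⁻¹ ^ p.1 * (Set.Iic N).indicator (r ^ ·) (p.1 + p.2 + 1))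
      (r ^ (N + 2) / (r - 1) ^ 2) := by
  have hr0 : 0 < r := one_pos.trans hr
  have hgeom := hasSum_geometric_of_lt_one (inv_nonneg.2 hr0.le) (inv_lt_one_of_one_lt₀ hr)
  have hprod := hgeom.mul_shear_of_nonneg (hasSum_indicator_Iic_zpow hr N)
    (fun i => pow_nonneg (inv_nonneg.2 hr0.le) i)
    (Set.indicator_nonneg fun k _ => zpow_nonneg hr0.le k) 1
  convert hprod using 1
  rw [add_comm N 2, zpow_add₀ hr0.ne', zpow_add_one₀ hr0.ne']
  field_simp

theorem bessel_sum_bound_general (D v t : ℝ) (hv : 0 < v) :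
    Summable (fun p : ℕ × ℤ =>
      if ((p.1 : ℝ) + (p.2 : ℝ) + 1 ≤ D) then
        (besselJ ((p.1 : ℤ) + p.2 + 1) (2 * t)) ^ 2 * Real.exp (v * ((p.2 : ℝ) + 1 / 2))
      else 0) ∧
    (∑' p : ℕ × ℤ,
      if ((p.1 : ℝ) + (p.2 : ℝ) + 1 ≤ D) then
        (besselJ ((p.1 : ℤ) + p.2 + 1) (2 * t)) ^ 2 * Real.exp (v * ((p.2 : ℝ) + 1 / 2))
      else 0)
      ≤ Real.exp (D * v + 2 * v) / (Real.exp v - 1) ^ 2 := by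
  set f : ℕ × ℤ → ℝ := fun p => if ((p.1 : ℝ) + (p.2 : ℝ) + 1 ≤ D) then
    (besselJ ((p.1 : ℤ) + p.2 + 1) (2 * t)) ^ 2 * Real.exp (v * ((p.2 : ℝ) + 1 / 2)) else 0
  set r := Real.exp v
  have hr0 : 0 < r := Real.exp_pos v
  have hdom := hasSum_inv_pow_mul_indicator_Iic_zpow (Real.one_lt_exp_iff.2 hv) ⌊D⌋
  have hf0 : ∀ p, 0 ≤ f p := fun p => by dsimp only [f]; split_ifs <;> positivity
  have hle : ∀ p : ℕ × ℤ, f p ≤ r⁻¹ ^ p.1 * (Set.Iic ⌊D⌋).indicator (r ^ ·) (p.1 + p.2 + 1) := by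
    rintro ⟨i, j⟩
    dsimp only [f]
    split_ifs with hD
    · have hmem : (i : ℤ) + j + 1 ∈ Set.Iic ⌊D⌋ := Int.le_floor.2 (by push_cast; exact hD)
      rw [Set.indicator_of_mem hmem, add_assoc, zpow_add₀ hr0.ne' (i : ℤ), zpow_natCast,
        ← mul_assoc, ← mul_pow, inv_mul_cancel₀ hr0.ne', one_pow, one_mul]
      exact besselJ_sq_mul_exp_le _ _ hv.le j
    · exact mul_nonneg (by positivity) (Set.indicator_nonneg (fun k _ => by positivity) _)
  have hf := Summable.of_nonneg_of_le hf0 hle hdom.summable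
  refine ⟨hf, (hasSum_le hle hf.hasSum hdom).trans ?_⟩
  rw [← Real.exp_int_mul]
  gcongr
  push_cast
  nlinarith [Int.floor_le D]

/-- For `D ∈ ℝ`, `v > 0` and `t > 0`, the sum over `a ∈ ℕ' = {1/2,3/2,…}` (written `a = i+1/2`)
and `ℓ ∈ ℤ' = ℤ + 1/2` (written `ℓ = j+1/2`) with `a + ℓ ≤ D` of
`J_{a+ℓ}(2t)²·e^{vℓ}` converges and is at most `e^{Dv+2v}/(e^v−1)²`. -/
theorem bessel_sum_bound (D v t : ℝ) (hv : 0 < v) (ht : 0 < t) :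
    Summable (fun p : ℕ × ℤ =>
      if ((p.1 : ℝ) + (p.2 : ℝ) + 1 ≤ D) then
        (besselJ ((p.1 : ℤ) + p.2 + 1) (2 * t)) ^ 2 * Real.exp (v * ((p.2 : ℝ) + 1 / 2))
      else 0) ∧
    (∑' p : ℕ × ℤ,
      if ((p.1 : ℝ) + (p.2 : ℝ) + 1 ≤ D) then
        (besselJ ((p.1 : ℤ) + p.2 + 1) (2 * t)) ^ 2 * Real.exp (v * ((p.2 : ℝ) + 1 / 2))
      else 0)
      ≤ Real.exp (D * v + 2 * v) / (Real.exp v - 1) ^ 2 :=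
  bessel_sum_bound_general D v t hv
end

section
/- For every φ ∈ 𝒴₁ and every x ∈ ℝ one has max(−x, 0)²/2 ≤ ∫₀^∞ max(φ(y) − y − x, 0) dy ≤ max(−x, 0)²/2 + 1. -/
open MeasureTheory Set

/-- The set `𝒴₁`: weakly decreasing functions `φ : [0,∞) → [0,∞)` with unit integral. -/
def MemYone (φ : ℝ → ℝ) : Prop :=
  (∀ x, 0 ≤ x → 0 ≤ φ x) ∧ AntitoneOn φ (Set.Ici 0) ∧
    (∫ x in Set.Ioi (0 : ℝ), φ x) = 1

/-! Since `φ ≥ 0`, the integrand is squeezed pointwise between `(-x - y)⁺` and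
`(-x - y)⁺ + φ y`. Integrating over `(0, ∞)`, the first gives `max (-x) 0 ^ 2 / 2`
(the area of a right isosceles triangle) and `φ` contributes `1`. -/

lemma integrableOn_Ioi_max_sub_zero (a b : ℝ) :
    IntegrableOn (fun y => max (a - y) 0) (Ioi b) := by
  rw [← Ioc_union_Ioi_eq_Ioi (le_max_right a b)]
  refine .union (Continuous.integrableOn_Ioc (by fun_prop)) ?_
  refine integrableOn_zero.congr_fun (fun y hy => ?_) measurableSet_Ioi
  exact (max_eq_right (sub_nonpos.2 ((le_max_left a b).trans hy.le))).symm

lemma integral_Ioi_max_sub_zero (a b : ℝ) :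
    ∫ y in Ioi b, max (a - y) 0 = max (a - b) 0 ^ 2 / 2 := by
  have vanish_Ioi : ∀ c, a ≤ c → ∫ y in Ioi c, max (a - y) 0 = 0 := fun c hc =>
    setIntegral_eq_zero_of_forall_eq_zero fun y hy =>
      max_eq_right (sub_nonpos.2 (hc.trans hy.le))
  rcases le_total a b with hab | hba
  · rw [vanish_Ioi b hab, max_eq_right (by linarith)]
    ring
  rw [← intervalIntegral.integral_interval_add_Ioi (integrableOn_Ioi_max_sub_zero a b)
    (integrableOn_Ioi_max_sub_zero a a), vanish_Ioi a le_rfl, add_zero,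
    max_eq_left (by linarith)]
  have on_Icc : EqOn (fun y => max (a - y) 0) (fun y => a - y) (uIcc b a) := fun y hy =>
    max_eq_left (by linarith [(uIcc_of_le hba ▸ hy).2])
  rw [intervalIntegral.integral_congr on_Icc, intervalIntegral.integral_sub
    intervalIntegrable_const intervalIntegral.intervalIntegrable_id]
  simp only [intervalIntegral.integral_const, integral_id, smul_eq_mul]
  ring

section NonnegShift

variable {p : ℝ → ℝ} {b : ℝ}

lemma max_neg_sub_zero_le_max_sub_sub_zero {q : ℝ} (hq : 0 ≤ q) (x y : ℝ) :
    max (-x - y) 0 ≤ max (q - y - x) 0 :=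
  max_le_max (by linarith) le_rfl

lemma max_sub_sub_zero_le_max_neg_sub_zero_add {q : ℝ} (hq : 0 ≤ q) (x y : ℝ) :
    max (q - y - x) 0 ≤ max (-x - y) 0 + q :=
  max_le (by linarith [le_max_left (-x - y) 0]) (by linarith [le_max_right (-x - y) 0])

lemma integrableOn_Ioi_max_sub_sub_zero (hp : IntegrableOn p (Ioi b)) (hp0 : ∀ y > b, 0 ≤ p y)
    (x : ℝ) : IntegrableOn (fun y => max (p y - y - x) 0) (Ioi b) := by
  refine Integrable.mono' ((integrableOn_Ioi_max_sub_zero (-x) b).add hp)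
    (by have := hp.aestronglyMeasurable; fun_prop) ?_
  filter_upwards [ae_restrict_mem measurableSet_Ioi] with y hy
  rw [Real.norm_of_nonneg (le_max_right _ _)]
  exact max_sub_sub_zero_le_max_neg_sub_zero_add (hp0 y hy) x y

lemma sq_div_two_le_integral_Ioi_max_sub_sub_zero (hp : IntegrableOn p (Ioi b))
    (hp0 : ∀ y > b, 0 ≤ p y) (x : ℝ) :
    max (-x - b) 0 ^ 2 / 2 ≤ ∫ y in Ioi b, max (p y - y - x) 0 := by
  rw [← integral_Ioi_max_sub_zero]
  refine setIntegral_mono_on (integrableOn_Ioi_max_sub_zero _ _)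
    (integrableOn_Ioi_max_sub_sub_zero hp hp0 x) measurableSet_Ioi fun y hy => ?_
  exact max_neg_sub_zero_le_max_sub_sub_zero (hp0 y hy) x y

lemma integral_Ioi_max_sub_sub_zero_le (hp : IntegrableOn p (Ioi b))
    (hp0 : ∀ y > b, 0 ≤ p y) (x : ℝ) :
    ∫ y in Ioi b, max (p y - y - x) 0 ≤ max (-x - b) 0 ^ 2 / 2 + ∫ y in Ioi b, p y := by
  rw [← integral_Ioi_max_sub_zero, ← integral_add (integrableOn_Ioi_max_sub_zero _ _) hp]
  refine setIntegral_mono_on (integrableOn_Ioi_max_sub_sub_zero hp hp0 x)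
    ((integrableOn_Ioi_max_sub_zero _ _).add hp) measurableSet_Ioi fun y hy => ?_
  exact max_sub_sub_zero_le_max_neg_sub_zero_add (hp0 y hy) x y

end NonnegShift

/-- For every `φ ∈ 𝒴₁` and every `x ∈ ℝ`,
`max(−x,0)²/2 ≤ ∫₀^∞ max(φ(y) − y − x, 0) dy ≤ max(−x,0)²/2 + 1`. -/
theorem vq_bounds (φ : ℝ → ℝ) (hφ : MemYone φ) (x : ℝ) :
    (max (-x) 0) ^ 2 / 2 ≤ (∫ y in Set.Ioi (0 : ℝ), max (φ y - y - x) 0) ∧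
    (∫ y in Set.Ioi (0 : ℝ), max (φ y - y - x) 0) ≤ (max (-x) 0) ^ 2 / 2 + 1 := by
  obtain ⟨hφ0, -, hφ1⟩ := hφ
  have hint : IntegrableOn φ (Ioi 0) := Integrable.of_integral_ne_zero (by simp [hφ1])
  have hpos : ∀ y > 0, 0 ≤ φ y := fun y hy => hφ0 y (le_of_lt hy)
  have lower := sq_div_two_le_integral_Ioi_max_sub_sub_zero hint hpos x
  have upper := integral_Ioi_max_sub_sub_zero_le hint hpos x
  rw [sub_zero] at lower upper
  exact ⟨lower, hφ1 ▸ upper⟩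
end

section
/- Fix y ∈ ℝ and φ ∈ 𝒴₁. Let (y_n) be a real sequence with y_n → y, and let (φ_n) be a sequence in 𝒴₁ with ‖φ_n − φ‖_{L¹([0,∞))} → 0. Then ∫₀^∞ max(φ_n(z) − z − y_n, 0) dz → ∫₀^∞ max(φ(z) − z − y, 0) dz as n → ∞. -/
/-!
A function `φ ∈ 𝒴₁` satisfies `z φ(z) ≤ ∫₀^z φ ≤ 1`, so `φ(z) ≤ 1 ≤ z + c` once `z ≥ 1` and
`z + c ≥ 1`. Since `y_n` is bounded below, all integrands therefore vanish beyond a common `R`.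
On `(0, R]` the positive part is `1`-Lipschitz, which bounds the difference of the integrals by
`‖φ_n − φ‖_{L¹} + R |y_n − y|`.
-/

open MeasureTheory Filter Topology

open Set

lemma AntitoneOn.mul_le_setIntegral_Ioi {φ : ℝ → ℝ} (hanti : AntitoneOn φ (Ici 0))
    (hnonneg : ∀ x, 0 ≤ x → 0 ≤ φ x) (hint : IntegrableOn φ (Ioi 0)) {z : ℝ} (hz : 0 ≤ z) :
    z * φ z ≤ ∫ x in Ioi 0, φ x :=
  calc z * φ z = ∫ _ in Ioc 0 z, φ z := by
        rw [setIntegral_const, Measure.real, Real.volume_Ioc, ENNReal.toReal_ofReal (by linarith),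
          sub_zero, smul_eq_mul]
    _ ≤ ∫ x in Ioc 0 z, φ x :=
        setIntegral_mono_on (integrableOn_const measure_Ioc_lt_top.ne)
          (hint.mono_set Ioc_subset_Ioi_self) measurableSet_Ioc fun x hx => hanti hx.1.le hz hx.2
    _ ≤ ∫ x in Ioi 0, φ x :=
        setIntegral_mono_set hint
          ((ae_restrict_mem measurableSet_Ioi).mono fun x hx => hnonneg x hx.le)
          Ioc_subset_Ioi_self.eventuallyLE

lemma abs_setIntegral_posPart_sub_le {α : Type*} [MeasurableSpace α] {μ : Measure α} {s : Set α}
    (hs : μ s ≠ ⊤) {f g : α → ℝ} (hf : IntegrableOn f s μ) (hg : IntegrableOn g s μ) (a b : ℝ) :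
    |∫ x in s, max (f x - a) 0 ∂μ - ∫ x in s, max (g x - b) 0 ∂μ|
      ≤ ∫ x in s, |f x - g x| ∂μ + μ.real s * |a - b| := by
  have hconst : ∀ c : ℝ, IntegrableOn (fun _ => c) s μ := fun _ => integrableOn_const hs
  have hfa : IntegrableOn (fun x => max (f x - a) 0) s μ := (hf.sub (hconst a)).pos_part
  have hgb : IntegrableOn (fun x => max (g x - b) 0) s μ := (hg.sub (hconst b)).pos_part
  have hfg : IntegrableOn (fun x => |f x - g x|) s μ := (hf.sub hg).abs
  rw [← integral_sub hfa hgb, ← smul_eq_mul, ← setIntegral_const, ← integral_add hfg (hconst _)]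
  refine abs_integral_le_integral_abs.trans <|
    setIntegral_mono (hfa.sub hgb).abs (hfg.add (hconst _)) fun x => ?_
  calc |max (f x - a) 0 - max (g x - b) 0| ≤ |(f x - a) - (g x - b)| := abs_max_sub_max_le_abs _ _ _
    _ = |(f x - g x) - (a - b)| := by ring_nf
    _ ≤ |f x - g x| + |a - b| := abs_sub _ _

noncomputable def excessIntegral (φ : ℝ → ℝ) (c : ℝ) : ℝ :=
  ∫ z in Ioi 0, max (φ z - z - c) 0

namespace MemYone

variable {φ ψ : ℝ → ℝ} {R : ℝ}

lemma integrableOn (hφ : MemYone φ) : IntegrableOn φ (Ioi 0) :=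
  Integrable.of_integral_ne_zero (hφ.2.2 ▸ one_ne_zero)

lemma mul_le_one (hφ : MemYone φ) {z : ℝ} (hz : 0 ≤ z) : z * φ z ≤ 1 :=
  hφ.2.2 ▸ hφ.2.1.mul_le_setIntegral_Ioi hφ.1 hφ.integrableOn hz

lemma posPart_sub_eq_zero (hφ : MemYone φ) {z c : ℝ} (hz : 1 ≤ z) (hzc : 1 ≤ z + c) :
    max (φ z - z - c) 0 = 0 := by
  have hmul := hφ.mul_le_one (zero_le_one.trans hz)
  have hnonneg := hφ.1 z (zero_le_one.trans hz)
  exact max_eq_right (by nlinarith)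

lemma excessIntegral_eq_integral_Ioc (hφ : MemYone φ) {c : ℝ} (hR : 1 ≤ R) (hc : 1 ≤ R + c) :
    excessIntegral φ c = ∫ z in Ioc 0 R, max (φ z - z - c) 0 :=
  setIntegral_eq_of_subset_of_forall_sdiff_eq_zero measurableSet_Ioi Ioc_subset_Ioi_self
    fun z hz => by
      have hRz : R < z := lt_of_not_ge fun h => hz.2 ⟨hz.1, h⟩
      exact hφ.posPart_sub_eq_zero (by linarith) (by linarith)

lemma abs_excessIntegral_sub_le (hφ : MemYone φ) (hψ : MemYone ψ) {a b : ℝ} (hR : 1 ≤ R)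
    (ha : 1 ≤ R + a) (hb : 1 ≤ R + b) :
    |excessIntegral φ a - excessIntegral ψ b| ≤ (∫ z in Ioi 0, |φ z - ψ z|) + R * |a - b| := by
  have hid : IntegrableOn (fun z : ℝ => z) (Ioc 0 R) := continuous_id.integrableOn_Ioc
  rw [hφ.excessIntegral_eq_integral_Ioc hR ha, hψ.excessIntegral_eq_integral_Ioc hR hb]
  refine (abs_setIntegral_posPart_sub_le measure_Ioc_lt_top.ne
    ((hφ.integrableOn.mono_set Ioc_subset_Ioi_self).sub hid)
    ((hψ.integrableOn.mono_set Ioc_subset_Ioi_self).sub hid) a b).trans ?_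
  simp only [Pi.sub_apply, sub_sub_sub_cancel_right, Measure.real, Real.volume_Ioc, sub_zero,
    ENNReal.toReal_ofReal (zero_le_one.trans hR)]
  exact add_le_add_left (setIntegral_mono_set (hφ.integrableOn.sub hψ.integrableOn).abs
    (Eventually.of_forall fun _ => abs_nonneg _) Ioc_subset_Ioi_self.eventuallyLE) _

end MemYone

/-- If `y_n → y` and `φ_n → φ` in `L¹([0,∞))` with `φ, φ_n ∈ 𝒴₁`, then
`∫₀^∞ [φ_n(z) − z − y_n]_+ dz → ∫₀^∞ [φ(z) − z − y]_+ dz`. -/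
theorem vq_continuity (φ : ℝ → ℝ) (hφ : MemYone φ) (y : ℝ)
    (yn : ℕ → ℝ) (hy : Tendsto yn atTop (nhds y))
    (φn : ℕ → ℝ → ℝ) (hφn : ∀ n, MemYone (φn n))
    (hL1 : Tendsto (fun n => ∫ z in Set.Ioi (0 : ℝ), |φn n z - φ z|) atTop (nhds 0)) :
    Tendsto (fun n => ∫ z in Set.Ioi (0 : ℝ), max (φn n z - z - yn n) 0) atTop
      (nhds (∫ z in Set.Ioi (0 : ℝ), max (φ z - z - y) 0)) := by
  change Tendsto (fun n => excessIntegral (φn n) (yn n)) atTop (𝓝 (excessIntegral φ y))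
  obtain ⟨m, hm⟩ := hy.bddBelow_range
  set R : ℝ := max 1 (1 - min y m)
  have hR : 1 ≤ R := le_max_left _ _
  have hRy : 1 ≤ R + y := by linarith [le_max_right 1 (1 - min y m), min_le_left y m]
  have hRyn : ∀ n, 1 ≤ R + yn n := fun n => by
    linarith [le_max_right 1 (1 - min y m), min_le_right y m, hm (mem_range_self n)]
  have hbound : Tendsto (fun n => (∫ z in Ioi 0, |φn n z - φ z|) + R * |yn n - y|) atTop (𝓝 0) := by
    simpa using hL1.add ((tendsto_iff_norm_sub_tendsto_zero.mp hy).const_mul R)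
  exact tendsto_iff_norm_sub_tendsto_zero.mpr <| squeeze_zero (fun _ => norm_nonneg _)
    (fun n => (hφn n).abs_excessIntegral_sub_le hφ hR (hRyn n) hRy) hbound
end

section
/- Let G : ℝ → [0, 1] be a decreasing function such that lim_{x→∞} x^{-2}·log G(−x) = 0 and lim_{x→∞} x^{-2}·log G(x) = −∞. Let O ⊆ ℝ be an open set and 𝔤 : O → ℝ a continuous function. Let (X_t)_{t ≥ 1} be a family of real-valued random variables (each defined on some probability space) such that lim_{t→∞} t^{-2}·log E[G(X_t − x·t)] = 𝔤(x) for every x ∈ O. Then for every x ∈ O one has lim_{t→∞} t^{-2}·log P(X_t ≤ x·t) = 𝔤(x). -/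
/-!
For `y < x < z`, monotonicity of `G` and `0 ≤ G ≤ 1` give
`G((x - z) t) · P(X_t ≤ x t) ≤ E[G(X_t - z t)]` and `E[G(X_t - y t)] ≤ P(X_t ≤ x t) + G((x - y) t)`.
On the scale `t⁻² log`, the factor `G((x - z) t)` costs nothing while `G((x - y) t)` is negligible
against `E[G(X_t - y t)]`, so the rate of `P(X_t ≤ x t)` is squeezed between `𝔤(y)` and `𝔤(z)`;
continuity of `𝔤` at `x` closes the gap.
-/

open MeasureTheory Filter Topology

noncomputable def scaledLog (f : ℝ → ℝ) (t : ℝ) : ℝ := 1 / t ^ 2 * Real.log (f t)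

section ScaledLog

variable {f g h : ℝ → ℝ}

lemma scaledLog_le_scaledLog {t : ℝ} (hf : 0 < f t) (hfg : f t ≤ g t) :
    scaledLog f t ≤ scaledLog g t :=
  mul_le_mul_of_nonneg_left (Real.log_le_log hf hfg) (by positivity)

lemma scaledLog_div {t : ℝ} (hf : f t ≠ 0) (hg : g t ≠ 0) :
    scaledLog (fun s => f s / g s) t = scaledLog f t - scaledLog g t := by
  simp only [scaledLog, Real.log_div hf hg, mul_sub]

lemma scaledLog_comp_mul {c : ℝ} (hc : c ≠ 0) :
    scaledLog (fun t => f (c * t)) = fun t => c ^ 2 * scaledLog f (c * t) := by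
  funext t
  rcases eq_or_ne t 0 with rfl | ht
  · simp [scaledLog]
  · simp only [scaledLog]
    field_simp

lemma tendsto_scaledLog_const (c : ℝ) :
    Tendsto (scaledLog fun _ => c) atTop (𝓝 0) := by
  show Tendsto (fun t : ℝ => 1 / t ^ 2 * Real.log c) atTop (𝓝 0)
  simpa [one_div] using
    (tendsto_inv_atTop_zero.comp (tendsto_pow_atTop two_ne_zero)).mul_const (Real.log c)

lemma tendsto_scaledLog_comp_mul_atBot (hf : Tendsto (scaledLog f) atTop atBot) {c : ℝ}
    (hc : 0 < c) : Tendsto (scaledLog fun t => f (c * t)) atTop atBot := by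
  rw [scaledLog_comp_mul hc.ne']
  exact (hf.comp (tendsto_id.const_mul_atTop hc)).const_mul_atBot (by positivity)

lemma tendsto_scaledLog_comp_mul_zero (hf : Tendsto (scaledLog f) atTop (𝓝 0)) {c : ℝ}
    (hc : 0 < c) : Tendsto (scaledLog fun t => f (c * t)) atTop (𝓝 0) := by
  rw [scaledLog_comp_mul hc.ne']
  simpa using (hf.comp (tendsto_id.const_mul_atTop hc)).const_mul (c ^ 2)

lemma eventually_mul_lt_of_tendsto_scaledLog {a C : ℝ} (hC : 0 < C) (hf : ∀ t, 0 < f t)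
    (hg : ∀ t, 0 < g t) (hfa : Tendsto (scaledLog f) atTop (𝓝 a))
    (hg_bot : Tendsto (scaledLog g) atTop atBot) : ∀ᶠ t in atTop, C * g t < f t := by
  have hfC := (hfa.sub (tendsto_scaledLog_const C)).eventually
    (eventually_gt_nhds (show a - 1 < a - 0 by linarith))
  filter_upwards [eventually_gt_atTop 0, hg_bot.eventually_lt_atBot (a - 1), hfC]
    with t ht hgt hft
  rw [← Real.log_lt_log_iff (by have := hg t; positivity) (hf t),
    Real.log_mul hC.ne' (hg t).ne']
  simp only [scaledLog] at hgt hft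
  have : 1 / t ^ 2 * (Real.log C + Real.log (g t)) < 1 / t ^ 2 * Real.log (f t) := by
    linarith [mul_add (1 / t ^ 2) (Real.log C) (Real.log (g t))]
  exact lt_of_mul_lt_mul_left this (by positivity)

lemma eventually_half_le_of_le_add {a : ℝ} (hf : ∀ t, 0 < f t) (hh : ∀ t, 0 < h t)
    (hfgh : ∀ t, f t ≤ g t + h t) (hfa : Tendsto (scaledLog f) atTop (𝓝 a))
    (hh_bot : Tendsto (scaledLog h) atTop atBot) : ∀ᶠ t in atTop, f t / 2 ≤ g t := by
  filter_upwards [eventually_mul_lt_of_tendsto_scaledLog two_pos hf hh hfa hh_bot] with t ht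
  linarith [hfgh t]

lemma eventually_lt_scaledLog_of_half_le {a b : ℝ} (hf : ∀ t, 0 < f t)
    (hfg : ∀ᶠ t in atTop, f t / 2 ≤ g t) (hfa : Tendsto (scaledLog f) atTop (𝓝 a))
    (hba : b < a) : ∀ᶠ t in atTop, b < scaledLog g t := by
  have hhalf : Tendsto (scaledLog fun t => f t / 2) atTop (𝓝 (a - 0)) := by
    simpa only [funext fun t => scaledLog_div (hf t).ne' two_ne_zero (g := fun _ => 2)]
      using hfa.sub (tendsto_scaledLog_const 2)
  filter_upwards [hhalf.eventually (eventually_gt_nhds (show b < a - 0 by linarith)), hfg]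
    with t hbt ht
  exact hbt.trans_le (scaledLog_le_scaledLog (half_pos (hf t)) ht)

lemma eventually_scaledLog_lt_of_mul_le {a b : ℝ} (hg : ∀ᶠ t in atTop, 0 < g t)
    (hh : ∀ t, 0 < h t) (hhgf : ∀ t, h t * g t ≤ f t) (hfa : Tendsto (scaledLog f) atTop (𝓝 a))
    (hh_zero : Tendsto (scaledLog h) atTop (𝓝 0)) (hab : a < b) :
    ∀ᶠ t in atTop, scaledLog g t < b := by
  have hquot := (hfa.sub hh_zero).eventually (eventually_lt_nhds (show a - 0 < b by linarith))
  filter_upwards [hquot, hg] with t hbt hgt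
  have hft : 0 < f t := (mul_pos (hh t) hgt).trans_le (hhgf t)
  calc scaledLog g t ≤ scaledLog (fun s => f s / h s) t :=
        scaledLog_le_scaledLog hgt ((le_div_iff₀' (hh t)).2 (hhgf t))
    _ = scaledLog f t - scaledLog h t := scaledLog_div hft.ne' (hh t).ne'
    _ < b := hbt

end ScaledLog

lemma Antitone.pos_of_tendsto_scaledLog_atBot {G : ℝ → ℝ} (hG : Antitone G)
    (hG0 : ∀ y, 0 ≤ G y) (hG_bot : Tendsto (scaledLog G) atTop atBot) (y : ℝ) : 0 < G y := by
  refine (hG0 y).lt_of_ne fun hy => ?_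
  obtain ⟨z, hyz, hz⟩ := (eventually_ge_atTop y |>.and (hG_bot.eventually_lt_atBot 0)).exists
  have hGz : G z = 0 := le_antisymm (hy ▸ hG hyz) (hG0 z)
  simp [scaledLog, hGz] at hz

section ShiftedExpectation

variable {Ω : Type*} [MeasurableSpace Ω] {μ : Measure Ω} {G : ℝ → ℝ} {X : Ω → ℝ}

lemma Antitone.integrable_comp_sub [IsFiniteMeasure μ] (hG : Antitone G)
    (hG01 : ∀ y, G y ∈ Set.Icc (0 : ℝ) 1) (hX : Measurable X) (b : ℝ) :
    Integrable (fun ω => G (X ω - b)) μ := by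
  refine .of_bound (hG.measurable.comp (hX.sub_const b)).aestronglyMeasurable 1
    (ae_of_all _ fun ω => ?_)
  rw [Real.norm_of_nonneg (hG01 _).1]
  exact (hG01 _).2

lemma Antitone.integral_comp_sub_pos [IsProbabilityMeasure μ] (hG : Antitone G)
    (hG01 : ∀ y, G y ∈ Set.Icc (0 : ℝ) 1) (hGpos : ∀ y, 0 < G y) (hX : Measurable X) (b : ℝ) :
    0 < ∫ ω, G (X ω - b) ∂μ := by
  rw [integral_pos_iff_support_of_nonneg (fun ω => (hG01 _).1) (hG.integrable_comp_sub hG01 hX b),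
    Function.support_eq_univ fun ω => (hGpos _).ne']
  simp

lemma Antitone.mul_measureReal_le_integral_comp_sub [IsFiniteMeasure μ] (hG : Antitone G)
    (hG01 : ∀ y, G y ∈ Set.Icc (0 : ℝ) 1) (hX : Measurable X) (a b : ℝ) :
    G (a - b) * μ.real {ω | X ω ≤ a} ≤ ∫ ω, G (X ω - b) ∂μ := by
  calc G (a - b) * μ.real {ω | X ω ≤ a}
      ≤ G (a - b) * μ.real {ω | G (a - b) ≤ G (X ω - b)} := by
        refine mul_le_mul_of_nonneg_left (measureReal_mono fun ω hω => ?_) (hG01 _).1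
        exact hG (sub_le_sub_right hω b)
    _ ≤ ∫ ω, G (X ω - b) ∂μ :=
        mul_meas_ge_le_integral_of_nonneg (ae_of_all _ fun ω => (hG01 _).1)
          (hG.integrable_comp_sub hG01 hX b) _

lemma Antitone.integral_comp_sub_le_measureReal_add [IsProbabilityMeasure μ] (hG : Antitone G)
    (hG01 : ∀ y, G y ∈ Set.Icc (0 : ℝ) 1) (hX : Measurable X) (a b : ℝ) :
    ∫ ω, G (X ω - b) ∂μ ≤ μ.real {ω | X ω ≤ a} + G (a - b) := by
  have hs : MeasurableSet {ω | X ω ≤ a} := measurableSet_le hX measurable_const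
  have hpt : ∀ ω, G (X ω - b) ≤ {ω | X ω ≤ a}.indicator 1 ω + G (a - b) := by
    intro ω
    by_cases hω : X ω ≤ a
    · simp only [Set.indicator_of_mem (show ω ∈ {ω | X ω ≤ a} from hω), Pi.one_apply]
      linarith [(hG01 (X ω - b)).2, (hG01 (a - b)).1]
    · simp only [Set.indicator_of_notMem (show ω ∉ {ω | X ω ≤ a} from hω), zero_add]
      exact hG (sub_le_sub_right (not_le.1 hω).le b)
  calc ∫ ω, G (X ω - b) ∂μ ≤ ∫ ω, ({ω | X ω ≤ a}.indicator 1 ω + G (a - b)) ∂μ :=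
        integral_mono (hG.integrable_comp_sub hG01 hX b)
          ((integrable_const 1).indicator hs |>.add (integrable_const _)) hpt
    _ = μ.real {ω | X ω ≤ a} + G (a - b) := by
        rw [integral_add ((integrable_const 1).indicator hs) (integrable_const _),
          integral_indicator_one hs, integral_const, probReal_univ, one_smul]

end ShiftedExpectation

theorem tendsto_scaledLog_of_shifted_bounds {G P : ℝ → ℝ} {E : ℝ → ℝ → ℝ} {O : Set ℝ}
    {g : ℝ → ℝ} {x : ℝ} (hGpos : ∀ y, 0 < G y)
    (hGleft : Tendsto (scaledLog fun y => G (-y)) atTop (𝓝 0))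
    (hGright : Tendsto (scaledLog G) atTop atBot) (hO : IsOpen O) (hx : x ∈ O)
    (hg : ContinuousOn g O) (hEpos : ∀ y t, 0 < E y t)
    (hE : ∀ y ∈ O, Tendsto (scaledLog (E y)) atTop (𝓝 (g y)))
    (hlow : ∀ y t, E y t ≤ P t + G ((x - y) * t))
    (hup : ∀ y t, G ((x - y) * t) * P t ≤ E y t) :
    Tendsto (scaledLog P) atTop (𝓝 (g x)) := by
  have hxO : O ∈ 𝓝 x := hO.mem_nhds hx
  have hgx : ContinuousAt g x := hg.continuousAt hxO
  have hhalf : ∀ y ∈ O, y < x → ∀ᶠ t in atTop, E y t / 2 ≤ P t := fun y hy hyx =>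
    eventually_half_le_of_le_add (hEpos y) (fun _ => hGpos _) (hlow y) (hE y hy)
      (tendsto_scaledLog_comp_mul_atBot hGright (sub_pos.2 hyx))
  -- the lower bound at any point left of `x` makes `P` positive, so that its logarithm is usable
  obtain ⟨y₀, hy₀x, hy₀O⟩ := Filter.Eventually.exists_lt hxO
  have hPpos : ∀ᶠ t in atTop, 0 < P t :=
    (hhalf y₀ hy₀O hy₀x).mono fun t ht => (half_pos (hEpos y₀ t)).trans_le ht
  refine tendsto_order.2 ⟨fun b hb => ?_, fun b hb => ?_⟩
  · obtain ⟨y, hyx, hyO, hby⟩ :=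
      (Filter.Eventually.and hxO (hgx.eventually (eventually_gt_nhds hb))).exists_lt
    exact eventually_lt_scaledLog_of_half_le (hEpos y) (hhalf y hyO hyx) (hE y hyO) hby
  · obtain ⟨y, hxy, hyO, hyb⟩ :=
      (Filter.Eventually.and hxO (hgx.eventually (eventually_lt_nhds hb))).exists_gt
    have hGshift : Tendsto (scaledLog fun t => G ((x - y) * t)) atTop (𝓝 0) := by
      simpa only [← neg_mul, neg_sub] using
        tendsto_scaledLog_comp_mul_zero hGleft (sub_pos.2 hxy)
    exact eventually_scaledLog_lt_of_mul_le hPpos (fun _ => hGpos _) (hup y) (hE y hyO)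
      hGshift hyb

/-- De-shifting lemma: if `G : ℝ → [0,1]` is decreasing with
`x⁻²·log G(−x) → 0` and `x⁻²·log G(x) → −∞`, `O` is open, `𝔤 : O → ℝ` is continuous, and
real random variables `X_t` satisfy `t⁻²·log E[G(X_t − x·t)] → 𝔤(x)` for all `x ∈ O`,
then `t⁻²·log P(X_t ≤ x·t) → 𝔤(x)` for all `x ∈ O`. -/
theorem deshifting_lemma (G : ℝ → ℝ) (hGanti : Antitone G)
    (hGrange : ∀ y, G y ∈ Set.Icc (0 : ℝ) 1)
    (hGleft : Tendsto (fun x : ℝ => (1 / x ^ 2) * Real.log (G (-x))) atTop (nhds 0))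
    (hGright : Tendsto (fun x : ℝ => (1 / x ^ 2) * Real.log (G x)) atTop atBot)
    (O : Set ℝ) (hO : IsOpen O) (g : ℝ → ℝ) (hg : ContinuousOn g O)
    (Ω : ℝ → Type*) (mΩ : ∀ t, MeasurableSpace (Ω t))
    (μ : ∀ t, Measure (Ω t)) (hprob : ∀ t, IsProbabilityMeasure (μ t))
    (X : ∀ t, Ω t → ℝ) (hX : ∀ t, Measurable (X t))
    (hlim : ∀ x ∈ O,
      Tendsto (fun t : ℝ => (1 / t ^ 2) * Real.log (∫ ω, G (X t ω - x * t) ∂μ t))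
        atTop (nhds (g x))) :
    ∀ x ∈ O,
      Tendsto (fun t : ℝ => (1 / t ^ 2) * Real.log ((μ t {ω | X t ω ≤ x * t}).toReal))
        atTop (nhds (g x)) := by
  intro x hx
  have hGpos := hGanti.pos_of_tendsto_scaledLog_atBot (fun y => (hGrange y).1) hGright
  refine tendsto_scaledLog_of_shifted_bounds (P := fun t => (μ t {ω | X t ω ≤ x * t}).toReal)
    (E := fun y t => ∫ ω, G (X t ω - y * t) ∂μ t) hGpos hGleft hGright hO hx hg
    (fun y t => ?_) hlim (fun y t => ?_) (fun y t => ?_)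
  all_goals have := hprob t
  · exact hGanti.integral_comp_sub_pos hGrange hGpos (hX t) _
  · rw [sub_mul]
    exact hGanti.integral_comp_sub_le_measureReal_add hGrange (hX t) _ _
  · rw [sub_mul]
    exact hGanti.mul_measureReal_le_integral_comp_sub hGrange (hX t) _ _
end

section
/- Fix q ∈ (0,1), γ > 0 and θ ∈ (0, log(1/q)). Let (A_k)_{k ≥ 1} be independent ℕ-valued random variables with A_k Poisson-distributed with mean q^k·γ². Then the random series S := Σ_{k ≥ 1} k·A_k is almost surely finite and E[e^{θ·S}] = exp( γ²·( q·e^θ/(1 − q·e^θ) − q/(1 − q) ) ). -/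
/-!
Put `X_k = e^{θ k A_k}`. By independence, the expectation of a finite product of the `X_k` is the
product of the Poisson moment generating functions `exp (q^k γ² (e^{θ k} - 1))`. Since `X_k ≥ 1`,
the partial products increase to `e^{θ S}`, and monotone convergence gives
`E[e^{θ S}] = exp (∑_k q^k γ² (e^{θ k} - 1))`, a difference of two geometric series. As `θ > 0`,
this expectation being finite forces `S < ∞` almost surely.
-/

open MeasureTheory ProbabilityTheory Finset
open scoped ENNReal NNReal

theorem Real.hasSum_pow_succ_of_lt_one {r : ℝ} (h₀ : 0 ≤ r) (h₁ : r < 1) :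
    HasSum (fun k : ℕ => r ^ (k + 1)) (r / (1 - r)) := by
  simpa only [pow_succ', div_eq_mul_inv] using (hasSum_geometric_of_lt_one h₀ h₁).mul_left r

theorem Real.hasSum_exp_mul_pow_div_factorial (m s : ℝ) :
    HasSum (fun j : ℕ => Real.exp (s * j) * (Real.exp (-m) * m ^ j / j.factorial))
      (Real.exp (m * (Real.exp s - 1))) := by
  have h := (NormedSpace.expSeries_div_hasSum_exp (m * Real.exp s)).mul_left (Real.exp (-m))
  rw [← Real.exp_eq_exp_ℝ, ← Real.exp_add, show -m + m * Real.exp s = m * (Real.exp s - 1) by ring]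
    at h
  refine h.congr_fun fun j => ?_
  rw [mul_pow, mul_comm s, Real.exp_nat_mul]
  ring

theorem hasSum_pow_succ_mul_exp_mul_succ_sub_one {q θ : ℝ} (a : ℝ) (hq₀ : 0 ≤ q) (hq₁ : q < 1)
    (hqθ : q * Real.exp θ < 1) :
    HasSum (fun k : ℕ => q ^ (k + 1) * a * (Real.exp (θ * (k + 1)) - 1))
      (a * (q * Real.exp θ / (1 - q * Real.exp θ) - q / (1 - q))) := by
  refine (((Real.hasSum_pow_succ_of_lt_one (by positivity) hqθ).sub
    (Real.hasSum_pow_succ_of_lt_one hq₀ hq₁)).mul_left a).congr_fun fun k => ?_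
  rw [mul_pow, ← Real.exp_nat_mul]
  push_cast
  ring_nf

theorem ENNReal.prod_ofReal_exp {ι : Type*} (s : Finset ι) (a : ι → ℝ) :
    ∏ i ∈ s, ENNReal.ofReal (Real.exp (a i)) = ENNReal.ofReal (Real.exp (∑ i ∈ s, a i)) := by
  rw [Real.exp_sum, ENNReal.ofReal_prod_of_nonneg fun _ _ => Real.exp_nonneg _]

theorem ENNReal.iSup_ofReal_exp_sum_range {a : ℕ → ℝ} {s : ℝ} (ha : ∀ k, 0 ≤ a k)
    (h : HasSum a s) :
    ⨆ n, ENNReal.ofReal (Real.exp (∑ k ∈ range n, a k)) = ENNReal.ofReal (Real.exp s) := by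
  refine iSup_eq_of_tendsto (fun m n hmn => ?_) ?_
  · exact ENNReal.ofReal_le_ofReal <| Real.exp_le_exp.mpr <|
      sum_le_sum_of_subset_of_nonneg (range_subset_range.mpr hmn) fun k _ _ => ha k
  · exact (ENNReal.continuous_ofReal.tendsto _).comp
      ((Real.continuous_exp.tendsto _).comp h.tendsto_sum_nat)

theorem ENNReal.iSup_ofReal_exp_sum_range_mul_eq {f : ℕ → ℝ≥0} {θ : ℝ} (hθ : 0 ≤ θ)
    (hf : ∑' k, (f k : ℝ≥0∞) ≠ ⊤) :
    ⨆ n, ENNReal.ofReal (Real.exp (∑ k ∈ range n, θ * f k))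
      = ENNReal.ofReal (Real.exp (θ * (∑' k, (f k : ℝ≥0∞)).toReal)) := by
  have hf' := ENNReal.tsum_coe_ne_top_iff_summable.mp hf
  rw [← ENNReal.coe_tsum hf', ENNReal.coe_toReal]
  exact ENNReal.iSup_ofReal_exp_sum_range (fun k => by positivity)
    ((NNReal.hasSum_coe.mpr hf'.hasSum).mul_left θ)

theorem ENNReal.tsum_coe_ne_top_of_iSup_ofReal_exp_sum_range_mul_ne_top {f : ℕ → ℝ≥0} {θ : ℝ}
    (hθ : 0 < θ)
    (hf : ⨆ n, ENNReal.ofReal (Real.exp (∑ k ∈ range n, θ * f k)) ≠ ⊤) :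
    ∑' k, (f k : ℝ≥0∞) ≠ ⊤ := by
  set C := ⨆ n, ENNReal.ofReal (Real.exp (∑ k ∈ range n, θ * f k))
  refine ne_top_of_le_ne_top (b := ENNReal.ofReal (C.toReal / θ)) ENNReal.ofReal_ne_top
    (ENNReal.tsum_le_of_sum_range_le fun n => ?_)
  have hexp : Real.exp (∑ k ∈ range n, θ * f k) ≤ C.toReal :=
    (ENNReal.ofReal_le_iff_le_toReal hf).mp
      (le_iSup (fun n => ENNReal.ofReal (Real.exp (∑ k ∈ range n, θ * f k))) n)
  have hlin : θ * ∑ k ∈ range n, (f k : ℝ) ≤ C.toReal := by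
    rw [mul_sum]
    linarith [Real.add_one_le_exp (∑ k ∈ range n, θ * f k)]
  rw [← ENNReal.ofNNReal_finsetSum, ← ENNReal.ofReal_coe_nnreal, NNReal.coe_sum]
  exact ENNReal.ofReal_le_ofReal ((le_div_iff₀' hθ).mpr hlin)

section Probability

variable {Ω : Type*} [MeasurableSpace Ω] {μ : Measure Ω}

theorem lintegral_ofReal_exp_mul_of_poisson {B : Ω → ℕ} (hB : Measurable B) {m : ℝ}
    (hm : 0 ≤ m)
    (hB_law : ∀ j : ℕ, μ {ω | B ω = j} = ENNReal.ofReal (Real.exp (-m) * m ^ j / j.factorial))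
    (s : ℝ) :
    ∫⁻ ω, ENNReal.ofReal (Real.exp (s * B ω)) ∂μ
      = ENNReal.ofReal (Real.exp (m * (Real.exp s - 1))) := by
  have hsum := Real.hasSum_exp_mul_pow_div_factorial m s
  rw [← lintegral_map (measurable_from_nat (f := fun j : ℕ => ENNReal.ofReal (Real.exp (s * j))))
      hB,
    lintegral_countable', ← hsum.tsum_eq,
    ENNReal.ofReal_tsum_of_nonneg (fun j => by positivity) hsum.summable]
  refine tsum_congr fun j => ?_
  rw [Measure.map_apply hB (measurableSet_singleton j), ENNReal.ofReal_mul (Real.exp_nonneg _)]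
  exact congrArg _ (hB_law j)

theorem lintegral_iSup_prod_range_of_iIndepFun {X : ℕ → Ω → ℝ≥0∞}
    (hX : ∀ k, Measurable (X k)) (hind : iIndepFun X μ) (hX_one : ∀ k ω, 1 ≤ X k ω) :
    ∫⁻ ω, ⨆ n, ∏ k ∈ range n, X k ω ∂μ = ⨆ n, ∏ k ∈ range n, ∫⁻ ω, X k ω ∂μ := by
  rw [lintegral_iSup (fun n => Finset.measurable_prod _ fun k _ => hX k)
    (fun m n hmn ω => prod_le_prod_of_subset_of_one_le' (range_subset_range.mpr hmn)
      fun k _ _ => hX_one k ω)]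
  simp_rw [lintegral_prod_eq_prod_lintegral_of_indepFun _ X hind hX]

theorem iIndepFun.ae_tsum_ne_top_and_integral_exp_mul_tsum {Y : ℕ → Ω → ℝ≥0}
    (hY : ∀ k, Measurable (Y k)) (hind : iIndepFun Y μ) {θ : ℝ} (hθ : 0 < θ) {c : ℕ → ℝ}
    {L : ℝ}
    (hc : ∀ k, ∫⁻ ω, ENNReal.ofReal (Real.exp (θ * Y k ω)) ∂μ
      = ENNReal.ofReal (Real.exp (c k)))
    (hL : HasSum c L) :
    (∀ᵐ ω ∂μ, ∑' k, (Y k ω : ℝ≥0∞) ≠ ⊤) ∧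
      ∫ ω, Real.exp (θ * (∑' k, (Y k ω : ℝ≥0∞)).toReal) ∂μ = Real.exp L := by
  have := hind.isProbabilityMeasure
  have hX_one : ∀ k ω, 1 ≤ ENNReal.ofReal (Real.exp (θ * Y k ω)) := fun k ω =>
    ENNReal.one_le_ofReal.mpr (Real.one_le_exp (by positivity))
  have hc_nonneg : ∀ k, 0 ≤ c k := fun k => by
    have h := lintegral_mono (μ := μ) (hX_one k)
    rwa [lintegral_one, measure_univ, hc, ENNReal.one_le_ofReal, Real.one_le_exp_iff] at h
  set F : Ω → ℝ≥0∞ := fun ω => ⨆ n, ENNReal.ofReal (Real.exp (∑ k ∈ range n, θ * Y k ω))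
  have hF_lintegral : ∫⁻ ω, F ω ∂μ = ENNReal.ofReal (Real.exp L) := by
    simp_rw [F, ← ENNReal.prod_ofReal_exp]
    rw [lintegral_iSup_prod_range_of_iIndepFun
      (X := fun k ω => ENNReal.ofReal (Real.exp (θ * Y k ω))) (fun k => by fun_prop)
      (hind.comp (fun _ y => ENNReal.ofReal (Real.exp (θ * y))) fun _ => by fun_prop) hX_one]
    simp_rw [hc, ENNReal.prod_ofReal_exp]
    exact ENNReal.iSup_ofReal_exp_sum_range hc_nonneg hL
  have hF_fin : ∀ᵐ ω ∂μ, F ω ≠ ⊤ :=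
    (ae_lt_top (by fun_prop) (hF_lintegral ▸ ENNReal.ofReal_ne_top)).mono fun _ => LT.lt.ne
  have hS_fin := hF_fin.mono fun ω =>
    ENNReal.tsum_coe_ne_top_of_iSup_ofReal_exp_sum_range_mul_ne_top hθ
  refine ⟨hS_fin, ?_⟩
  have hS_meas : Measurable fun ω => ∑' k, (Y k ω : ℝ≥0∞) := by fun_prop
  rw [integral_eq_lintegral_of_nonneg_ae (.of_forall fun ω => (Real.exp_nonneg _))
      (hS_meas.ennreal_toReal.const_mul θ).exp.aestronglyMeasurable,
    lintegral_congr_ae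
      (hS_fin.mono fun ω h => (ENNReal.iSup_ofReal_exp_sum_range_mul_eq hθ.le h).symm),
    hF_lintegral, ENNReal.toReal_ofReal (Real.exp_nonneg _)]

end Probability

theorem poisson_series_mgf_general (q γ θ : ℝ) (hq : q ∈ Set.Ioo (0 : ℝ) 1)
    (hθ : θ ∈ Set.Ioo 0 (Real.log (1 / q)))
    {Ω : Type*} [MeasurableSpace Ω] (μ : Measure Ω)
    (A : ℕ → Ω → ℕ) (hmeas : ∀ k, Measurable (A k))
    (hindep : iIndepFun A μ)
    (hdist : ∀ k j : ℕ, μ {ω | A k ω = j} =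
      ENNReal.ofReal
        (Real.exp (-(q ^ (k + 1) * γ ^ 2)) * (q ^ (k + 1) * γ ^ 2) ^ j / Nat.factorial j)) :
    (∀ᵐ ω ∂μ, (∑' k : ℕ, (((k + 1) * A k ω : ℕ) : ℝ≥0∞)) < ⊤) ∧
    (∫ ω, Real.exp (θ * (∑' k : ℕ, (((k + 1) * A k ω : ℕ) : ℝ≥0∞)).toReal) ∂μ)
      = Real.exp (γ ^ 2 * (q * Real.exp θ / (1 - q * Real.exp θ) - q / (1 - q))) := by
  obtain ⟨hq₀, hq₁⟩ := hq
  obtain ⟨hθ₀, hθq⟩ := hθ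
  have hqθ : q * Real.exp θ < 1 := by
    have h := Real.exp_lt_exp.mpr hθq
    rwa [Real.exp_log (by positivity), lt_div_iff₀' hq₀] at h
  have hmgf (k : ℕ) : ∫⁻ ω, ENNReal.ofReal (Real.exp (θ * (((k + 1) * A k ω : ℕ) : ℝ≥0))) ∂μ
      = ENNReal.ofReal (Real.exp (q ^ (k + 1) * γ ^ 2 * (Real.exp (θ * (k + 1)) - 1))) := by
    rw [← lintegral_ofReal_exp_mul_of_poisson (hmeas k) (by positivity) (hdist k)]
    congr! 4 with ω
    push_cast
    ring
  have h := iIndepFun.ae_tsum_ne_top_and_integral_exp_mul_tsum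
    (fun k => measurable_from_nat.comp (hmeas k))
    (hindep.comp (fun k (j : ℕ) => (((k + 1) * j : ℕ) : ℝ≥0)) fun _ => measurable_from_nat)
    hθ₀ hmgf (hasSum_pow_succ_mul_exp_mul_succ_sub_one _ hq₀.le hq₁ hqθ)
  simp only [Function.comp_apply, ENNReal.coe_natCast] at h
  exact ⟨h.1.mono fun _ => Ne.lt_top, h.2⟩

/-- If `(A_k)_{k ≥ 1}` are independent Poisson random variables with `A_k` of mean
`q^k·γ²` (here encoded as `A : ℕ → Ω → ℕ` with index `k` standing for `k+1`), and
`0 < θ < log(1/q)`, then `S = Σ_{k ≥ 1} k·A_k` is almost surely finite and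
`E[e^{θS}] = exp( γ²·( q·e^θ/(1 − q·e^θ) − q/(1 − q) ) )`. -/
theorem poisson_series_mgf (q γ θ : ℝ) (hq : q ∈ Set.Ioo (0 : ℝ) 1) (hγ : 0 < γ)
    (hθ : θ ∈ Set.Ioo 0 (Real.log (1 / q)))
    {Ω : Type*} [MeasurableSpace Ω] (μ : Measure Ω) [IsProbabilityMeasure μ]
    (A : ℕ → Ω → ℕ) (hmeas : ∀ k, Measurable (A k))
    (hindep : iIndepFun A μ)
    (hdist : ∀ k j : ℕ, μ {ω | A k ω = j} =
      ENNReal.ofReal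
        (Real.exp (-(q ^ (k + 1) * γ ^ 2)) * (q ^ (k + 1) * γ ^ 2) ^ j / Nat.factorial j)) :
    (∀ᵐ ω ∂μ, (∑' k : ℕ, (((k + 1) * A k ω : ℕ) : ℝ≥0∞)) < ⊤) ∧
    (∫ ω, Real.exp (θ * (∑' k : ℕ, (((k + 1) * A k ω : ℕ) : ℝ≥0∞)).toReal) ∂μ)
      = Real.exp (γ ^ 2 * (q * Real.exp θ / (1 - q * Real.exp θ) - q / (1 - q))) :=
  poisson_series_mgf_general q γ θ hq hθ μ A hmeas hindep hdist
end
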